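/- arXiv:0707.4559 — 2 statements merged into one kernel-verified Lean document; each statement's English description precedes it below -/
import Mathlib

section
/- Entropic uncertainty relation for POVMs: For any two POVMs A = {A_a} and B = {B_b} on a finite-dimensional Hilbert space and any density operator ρ, H(A|ρ) + H(B|ρ) ≥ -2 log max_{a,b} ‖A_a^{1/2} B_b^{1/2}‖, where H(A|ρ) = -Σ_a tr(ρ A_a) log tr(ρ A_a) is the Shannon entropy of the outcome distribution. -/
open Matrix
open scoped ComplexOrder

/-- Operator norm of a matrix, acting on the Euclidean space. -/
noncomputable def opNorm {n : Type*} [Fintype n] [DecidableEq n]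
    (M : Matrix n n ℂ) : ℝ :=
  ‖Matrix.toEuclideanCLM (𝕜 := ℂ) M‖

/-- Shannon entropy of the outcome distribution of a POVM `A` in a state `ρ`,
`H(A|ρ) = -∑ a, tr(ρ A_a) log tr(ρ A_a)` (natural logarithm as the fixed base). -/
noncomputable def povmEntropy {n ι : Type*} [Fintype n] [Fintype ι]
    (ρ : Matrix n n ℂ) (A : ι → Matrix n n ℂ) : ℝ :=
  -∑ a, (ρ * A a).trace.re * Real.log (ρ * A a).trace.re

/-!
Writing the state as a unit vector `Ω` (via the GNS construction of `X ↦ tr(ρ X)`) and the POVMs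
as `A_i = P_i²`, `B_j = Q_j²` with self-adjoint `P_i`, `Q_j`, the Kirkwood–Dirac quasiprobabilities
`t_ij = ⟪A_i Ω, B_j Ω⟫` have marginals `p_i = ‖P_i Ω‖²` and `q_j = ‖Q_j Ω‖²`. The entire function
`F z = ∑ p_i^(z/2) q_j^(z/2) t_ij` has `F 0 = 1`, is bounded by `1` on `re z = 0` (a combination
`∑ λ_i A_i` with `|λ_i| ≤ 1` is a contraction) and by `C = max ‖P_i Q_j‖` on `re z = 1` (since
`|t_ij| ≤ √p_i C √q_j`). By Hadamard's three-lines theorem `|F x| ≤ C ^ x` on `[0, 1]`, and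
comparing derivatives at `0`, where `F' 0 = -(H(A) + H(B)) / 2`, gives the inequality.
-/

open Complex Complex.HadamardThreeLines Set
open scoped InnerProductSpace

theorem Real.exp_log_mul_self_of_nonneg {x : ℝ} (hx : 0 ≤ x) :
    Real.exp (Real.log x) * x = x ^ 2 := by
  rcases hx.eq_or_lt with rfl | hx
  · simp
  · rw [Real.exp_log hx, sq]

theorem Real.negMulLog_sq (x : ℝ) : Real.negMulLog (x ^ 2) = -2 * (Real.log x * x ^ 2) := by
  rw [Real.negMulLog, Real.log_pow]
  push_cast
  ring

theorem re_le_log_of_hasDerivAt_of_norm_le_on_strip {F : ℂ → ℂ} {D : ℂ} {C : ℝ}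
    (hd : DiffContOnCl ℂ F (verticalStrip 0 1))
    (hB : BddAbove ((norm ∘ F) '' verticalClosedStrip 0 1))
    (h0 : ∀ z ∈ re ⁻¹' {0}, ‖F z‖ ≤ 1) (h1 : ∀ z ∈ re ⁻¹' {1}, ‖F z‖ ≤ C)
    (hF0 : F 0 = 1) (hF' : HasDerivAt F D 0) (hC : 0 < C) :
    D.re ≤ Real.log C := by
  set g : ℝ → ℝ := fun x => Real.exp (x * Real.log C) - (F x).re
  have hg : HasDerivAt g (Real.log C - D.re) 0 := by
    have hexp : HasDerivAt (fun x : ℝ => Real.exp (x * Real.log C)) (Real.log C) 0 := by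
      simpa using ((hasDerivAt_id (0 : ℝ)).mul_const (Real.log C)).exp
    exact hexp.sub (HasDerivAt.real_of_complex (by simpa using hF'))
  have hmin : IsMinOn g (Icc 0 1) 0 := by
    intro x hx
    have hx' : (x : ℂ) ∈ verticalClosedStrip 0 1 := by simpa [verticalClosedStrip] using hx
    have h3 := norm_le_interp_of_mem_verticalClosedStrip₀₁' F hx' hd hB h0 h1
    simp only [ofReal_re, Real.one_rpow, one_mul, Real.rpow_def_of_pos hC] at h3
    simp only [mem_ofPred_eq, g, ofReal_zero, hF0, zero_mul, Real.exp_zero, one_re, sub_self,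
      sub_nonneg]
    rw [mul_comm] at h3
    linarith [re_le_norm (F x)]
  have hcone : (1 : ℝ) ∈ posTangentConeAt (Icc 0 1) 0 :=
    mem_posTangentConeAt_of_segment_subset (by simp [segment_eq_Icc])
  have := hmin.localize.hasFDerivWithinAt_nonneg hg.hasFDerivAt.hasFDerivWithinAt hcone
  simpa using this

theorem norm_exp_mul_ofReal_le_of_mem_verticalClosedStrip {z : ℂ}
    (hz : z ∈ verticalClosedStrip 0 1) (c : ℝ) : ‖exp (z * c)‖ ≤ Real.exp |c| := by
  obtain ⟨h0, h1⟩ : 0 ≤ z.re ∧ z.re ≤ 1 := hz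
  rw [norm_exp, re_mul_ofReal, Real.exp_le_exp]
  calc z.re * c ≤ |z.re * c| := le_abs_self _
    _ = z.re * |c| := by rw [abs_mul, abs_of_nonneg h0]
    _ ≤ |c| := mul_le_of_le_one_left (abs_nonneg c) h1

theorem re_sum_mul_le_log_of_norm_exp_sum_le {ι : Type*} [Fintype ι] (c : ι → ℝ) (t : ι → ℂ)
    {C : ℝ} (ht : ∑ i, t i = 1)
    (h0 : ∀ z : ℂ, z.re = 0 → ‖∑ i, exp (z * c i) * t i‖ ≤ 1)
    (h1 : ∀ z : ℂ, z.re = 1 → ‖∑ i, exp (z * c i) * t i‖ ≤ C) (hC : 0 < C) :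
    (∑ i, c i * t i).re ≤ Real.log C := by
  set F : ℂ → ℂ := fun z => ∑ i, exp (z * c i) * t i
  have hdiff : Differentiable ℂ F := by fun_prop
  have hB : BddAbove ((norm ∘ F) '' verticalClosedStrip 0 1) := by
    refine ⟨∑ i, Real.exp |c i| * ‖t i‖, ?_⟩
    rintro _ ⟨z, hz, rfl⟩
    refine (norm_sum_le _ _).trans (Finset.sum_le_sum fun i _ => ?_)
    rw [norm_mul]
    gcongr
    exact norm_exp_mul_ofReal_le_of_mem_verticalClosedStrip hz (c i)
  have hF' : HasDerivAt F (∑ i, c i * t i) 0 := by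
    have := HasDerivAt.fun_sum (u := Finset.univ) fun i _ =>
      (((hasDerivAt_id (0 : ℂ)).mul_const (c i : ℂ)).cexp).mul_const (t i)
    simpa using this
  exact re_le_log_of_hasDerivAt_of_norm_le_on_strip hdiff.diffContOnCl hB h0 h1
    (by simpa [F] using ht) hF' hC

section SquareRootPOVM

variable {V : Type*} [SeminormedAddCommGroup V] [InnerProductSpace ℂ V] {ι κ : Type*}

theorem sum_apply_apply_eq_self [Fintype ι] {P : ι → Module.End ℂ V}
    (hsum : ∑ i, P i * P i = 1) (x : V) : ∑ i, P i (P i x) = x := by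
  simpa using congr($hsum x)

theorem sum_norm_apply_sq [Fintype ι] {P : ι → Module.End ℂ V} (hP : ∀ i, (P i).IsSymmetric)
    (hsum : ∑ i, P i * P i = 1) (x : V) :
    ∑ i, ‖P i x‖ ^ 2 = ‖x‖ ^ 2 := by
  simp_rw [norm_sq_eq_re_inner (𝕜 := ℂ), hP _ _, ← map_sum, ← inner_sum,
    sum_apply_apply_eq_self hsum]

theorem norm_sum_smul_apply_apply_le [Fintype ι] {P : ι → Module.End ℂ V}
    (hP : ∀ i, (P i).IsSymmetric) (hsum : ∑ i, P i * P i = 1) {c : ι → ℂ} (hc : ∀ i, ‖c i‖ ≤ 1)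
    (x : V) :
    ‖∑ i, c i • P i (P i x)‖ ≤ ‖x‖ := by
  set w := ∑ i, c i • P i (P i x)
  have hw : ‖w‖ ^ 2 ≤ ‖w‖ * ‖x‖ := calc
    ‖w‖ ^ 2 = ‖∑ i, c i * ⟪P i w, P i x⟫_ℂ‖ := by
      simp_rw [hP _ w, ← inner_smul_right, ← inner_sum]
      rw [inner_self_eq_norm_sq_to_K]
      simp
    _ ≤ ∑ i, ‖P i w‖ * ‖P i x‖ := by
      refine (norm_sum_le _ _).trans (Finset.sum_le_sum fun i _ => ?_)
      rw [norm_mul]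
      exact (mul_le_of_le_one_left (norm_nonneg _) (hc i)).trans (norm_inner_le_norm _ _)
    _ ≤ √(∑ i, ‖P i w‖ ^ 2) * √(∑ i, ‖P i x‖ ^ 2) := Real.sum_mul_le_sqrt_mul_sqrt _ _ _
    _ = ‖w‖ * ‖x‖ := by
      rw [sum_norm_apply_sq hP hsum, sum_norm_apply_sq hP hsum, Real.sqrt_sq (norm_nonneg _),
        Real.sqrt_sq (norm_nonneg _)]
  nlinarith [norm_nonneg w, norm_nonneg x]

theorem pos_of_norm_apply_apply_le [Fintype ι] [Fintype κ] {P : ι → Module.End ℂ V}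
    {Q : κ → Module.End ℂ V}
    (hP : ∀ i, (P i).IsSymmetric) (hQ : ∀ j, (Q j).IsSymmetric)
    (hPsum : ∑ i, P i * P i = 1) (hQsum : ∑ j, Q j * Q j = 1) {x : V} (hx : ‖x‖ ≠ 0)
    {C : ℝ} (hC : ∀ i j, ‖P i (Q j x)‖ ≤ C * ‖x‖) : 0 < C := by
  by_contra! hC0
  have hzero : ∀ i j, ‖P i (Q j x)‖ = 0 := fun i j =>
    le_antisymm ((hC i j).trans (mul_nonpos_of_nonpos_of_nonneg hC0 (norm_nonneg x)))
      (norm_nonneg _)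
  have hsq : ‖x‖ ^ 2 = ∑ j, ∑ i, ‖P i (Q j x)‖ ^ 2 := by
    simp_rw [sum_norm_apply_sq hP hPsum, sum_norm_apply_sq hQ hQsum]
  simp [hzero, hx] at hsq

/-- The Kirkwood–Dirac quasiprobability `⟪Ω, A_i B_j Ω⟫` of the POVMs `A_i = P_i²`, `B_j = Q_j²`
in the state `Ω`. -/
def kirkwoodDirac (P : ι → Module.End ℂ V) (Q : κ → Module.End ℂ V) (Ω : V) (i : ι) (j : κ) :
    ℂ :=
  ⟪P i (P i Ω), Q j (Q j Ω)⟫_ℂ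

variable {P : ι → Module.End ℂ V} {Q : κ → Module.End ℂ V} {Ω : V}

theorem sum_kirkwoodDirac_right [Fintype κ] (hP : ∀ i, (P i).IsSymmetric)
    (hQsum : ∑ j, Q j * Q j = 1) (i : ι) : ∑ j, kirkwoodDirac P Q Ω i j = (‖P i Ω‖ ^ 2 : ℝ) := by
  simp only [kirkwoodDirac]
  rw [← inner_sum, sum_apply_apply_eq_self hQsum, hP, inner_self_eq_norm_sq_to_K]
  push_cast; rfl

theorem sum_kirkwoodDirac_left [Fintype ι] (hQ : ∀ j, (Q j).IsSymmetric)
    (hPsum : ∑ i, P i * P i = 1) (j : κ) : ∑ i, kirkwoodDirac P Q Ω i j = (‖Q j Ω‖ ^ 2 : ℝ) := by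
  simp only [kirkwoodDirac]
  rw [← sum_inner, sum_apply_apply_eq_self hPsum, ← hQ, inner_self_eq_norm_sq_to_K]
  push_cast; rfl

theorem norm_kirkwoodDirac_le (hP : ∀ i, (P i).IsSymmetric) {C : ℝ} {i : ι} {j : κ}
    (hC : ∀ x, ‖P i (Q j x)‖ ≤ C * ‖x‖) :
    ‖kirkwoodDirac P Q Ω i j‖ ≤ ‖P i Ω‖ * (C * ‖Q j Ω‖) := by
  rw [kirkwoodDirac, hP]
  exact (norm_inner_le_norm _ _).trans (by gcongr; exact hC _)

theorem kirkwoodDirac_sum_sum_eq_inner [Fintype ι] [Fintype κ] (a : ι → ℂ) (b : κ → ℂ) :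
    ∑ i, ∑ j, a i * b j * kirkwoodDirac P Q Ω i j =
      ⟪∑ i, star (a i) • P i (P i Ω), ∑ j, b j • Q j (Q j Ω)⟫_ℂ := by
  simp_rw [sum_inner, inner_sum, inner_smul_left, inner_smul_right, kirkwoodDirac]
  simp [mul_assoc]

theorem norm_sum_sum_mul_kirkwoodDirac_le_of_norm_le_one [Fintype ι] [Fintype κ]
    (hP : ∀ i, (P i).IsSymmetric)
    (hQ : ∀ j, (Q j).IsSymmetric) (hPsum : ∑ i, P i * P i = 1) (hQsum : ∑ j, Q j * Q j = 1)
    {a : ι → ℂ} {b : κ → ℂ} (ha : ∀ i, ‖a i‖ ≤ 1) (hb : ∀ j, ‖b j‖ ≤ 1) :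
    ‖∑ i, ∑ j, a i * b j * kirkwoodDirac P Q Ω i j‖ ≤ ‖Ω‖ ^ 2 := by
  rw [kirkwoodDirac_sum_sum_eq_inner, sq]
  refine (norm_inner_le_norm _ _).trans (mul_le_mul ?_ ?_ (norm_nonneg _) (norm_nonneg _))
  · exact norm_sum_smul_apply_apply_le hP hPsum (fun i => (norm_star _).trans_le (ha i)) Ω
  · exact norm_sum_smul_apply_apply_le hQ hQsum hb Ω

theorem norm_sum_sum_mul_kirkwoodDirac_le_of_norm_mul_le [Fintype ι] [Fintype κ]
    (hP : ∀ i, (P i).IsSymmetric)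
    (hQ : ∀ j, (Q j).IsSymmetric) (hPsum : ∑ i, P i * P i = 1) (hQsum : ∑ j, Q j * Q j = 1)
    {C : ℝ} (hC0 : 0 ≤ C) (hC : ∀ i j x, ‖P i (Q j x)‖ ≤ C * ‖x‖) {a : ι → ℂ} {b : κ → ℂ}
    (ha : ∀ i, ‖a i‖ * ‖P i Ω‖ ≤ ‖P i Ω‖ ^ 2) (hb : ∀ j, ‖b j‖ * ‖Q j Ω‖ ≤ ‖Q j Ω‖ ^ 2) :
    ‖∑ i, ∑ j, a i * b j * kirkwoodDirac P Q Ω i j‖ ≤ C * ‖Ω‖ ^ 2 * ‖Ω‖ ^ 2 := by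
  calc ‖∑ i, ∑ j, a i * b j * kirkwoodDirac P Q Ω i j‖
      ≤ ∑ i, ∑ j, C * (‖a i‖ * ‖P i Ω‖) * (‖b j‖ * ‖Q j Ω‖) := by
        refine (norm_sum_le _ _).trans (Finset.sum_le_sum fun i _ => ?_)
        refine (norm_sum_le _ _).trans (Finset.sum_le_sum fun j _ => ?_)
        rw [norm_mul, norm_mul]
        calc ‖a i‖ * ‖b j‖ * ‖kirkwoodDirac P Q Ω i j‖
            ≤ ‖a i‖ * ‖b j‖ * (‖P i Ω‖ * (C * ‖Q j Ω‖)) := by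
              gcongr; exact norm_kirkwoodDirac_le hP (hC i j)
          _ = _ := by ring
    _ ≤ ∑ i, ∑ j, C * ‖P i Ω‖ ^ 2 * ‖Q j Ω‖ ^ 2 := by
      gcongr ∑ i, ∑ j, C * ?_ * ?_ with i _ j _
      exacts [ha i, hb j]
    _ = C * (∑ i, ‖P i Ω‖ ^ 2) * ∑ j, ‖Q j Ω‖ ^ 2 := by
      simp only [Finset.mul_sum, Finset.sum_mul, mul_assoc]
      exact Finset.sum_comm
    _ = C * ‖Ω‖ ^ 2 * ‖Ω‖ ^ 2 := by
      rw [sum_norm_apply_sq hP hPsum, sum_norm_apply_sq hQ hQsum]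

theorem InnerProductSpace.maassen_uffink [Fintype ι] [Fintype κ] (hP : ∀ i, (P i).IsSymmetric)
    (hQ : ∀ j, (Q j).IsSymmetric) (hPsum : ∑ i, P i * P i = 1) (hQsum : ∑ j, Q j * Q j = 1)
    (hΩ : ‖Ω‖ = 1) {C : ℝ} (hC : ∀ i j x, ‖P i (Q j x)‖ ≤ C * ‖x‖) :
    -2 * Real.log C ≤ ∑ i, Real.negMulLog (‖P i Ω‖ ^ 2) + ∑ j, Real.negMulLog (‖Q j Ω‖ ^ 2) := by
  have hCpos : 0 < C :=
    pos_of_norm_apply_apply_le hP hQ hPsum hQsum (by simp [hΩ]) fun i j => hC i j Ω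
  -- `exp (z * c ij) = p_i^(z/2) q_j^(z/2)`; when `p_i = 0` the junk value `Real.log 0 = 0` gives
  -- weight `1` instead, which is harmless because then `t ij = 0`.
  set c : ι × κ → ℝ := fun ij => Real.log ‖P ij.1 Ω‖ + Real.log ‖Q ij.2 Ω‖
  set t : ι × κ → ℂ := fun ij => kirkwoodDirac P Q Ω ij.1 ij.2
  have hfactor : ∀ z : ℂ, ∑ ij, exp (z * c ij) * t ij = ∑ i, ∑ j, exp (z * Real.log ‖P i Ω‖) *
      exp (z * Real.log ‖Q j Ω‖) * kirkwoodDirac P Q Ω i j := fun z => by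
    simp [c, t, Fintype.sum_prod_type, mul_add, exp_add]
  have hnorm : ∀ z : ℂ, ∀ x : ℝ, ‖exp (z * Real.log x)‖ = Real.exp (z.re * Real.log x) :=
    fun z x => by rw [norm_exp, re_mul_ofReal]
  have hderiv : (∑ ij, c ij * t ij).re =
      ∑ i, Real.log ‖P i Ω‖ * ‖P i Ω‖ ^ 2 + ∑ j, Real.log ‖Q j Ω‖ * ‖Q j Ω‖ ^ 2 := by
    simp only [c, t, Fintype.sum_prod_type, ofReal_add, add_mul, Finset.sum_add_distrib,
      ← Finset.mul_sum, sum_kirkwoodDirac_right hP hQsum]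
    rw [Finset.sum_comm (f := fun i j => _ * kirkwoodDirac P Q Ω i j)]
    simp only [← Finset.mul_sum, sum_kirkwoodDirac_left hQ hPsum]
    norm_cast
  have hinterp : (∑ ij, c ij * t ij).re ≤ Real.log C := by
    refine re_sum_mul_le_log_of_norm_exp_sum_le c t ?_ (fun z hz => ?_) (fun z hz => ?_) hCpos
    · simp only [t, Fintype.sum_prod_type, sum_kirkwoodDirac_right hP hQsum]
      rw [← ofReal_sum, sum_norm_apply_sq hP hPsum, hΩ]
      simp
    · rw [hfactor]
      refine (norm_sum_sum_mul_kirkwoodDirac_le_of_norm_le_one hP hQ hPsum hQsum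
        (fun i => ?_) (fun j => ?_)).trans_eq (by simp [hΩ]) <;> simp [hnorm, hz]
    · rw [hfactor]
      refine (norm_sum_sum_mul_kirkwoodDirac_le_of_norm_mul_le hP hQ hPsum hQsum hCpos.le hC
        (fun i => ?_) (fun j => ?_)).trans_eq (by simp [hΩ]) <;>
      simpa [hnorm, hz] using (Real.exp_log_mul_self_of_nonneg (norm_nonneg _)).le
  rw [Finset.sum_congr rfl fun i _ => Real.negMulLog_sq _,
    Finset.sum_congr rfl fun j _ => Real.negMulLog_sq _, ← Finset.mul_sum, ← Finset.mul_sum]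
  linarith

end SquareRootPOVM

namespace PositiveLinearMap

variable {A : Type*} [CStarAlgebra A] [PartialOrder A] [StarOrderedRing A] (f : A →ₚ[ℂ] ℂ)

theorem isSymmetric_leftMulMapPreGNS {a : A} (ha : IsSelfAdjoint a) :
    (f.leftMulMapPreGNS a).toLinearMap.IsSymmetric := fun x y => by
  simp [preGNS_inner_def, ha.star_eq, mul_assoc]

theorem norm_leftMulMapPreGNS_le (a : A) : ‖f.leftMulMapPreGNS a‖ ≤ ‖a‖ :=
  LinearMap.mkContinuous_norm_le _ (norm_nonneg a) _

theorem sum_leftMulMapPreGNS_mul_self {ι : Type*} [Fintype ι] {S : ι → A}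
    (hS : ∑ i, S i * S i = 1) :
    ∑ i, (f.leftMulMapPreGNS (S i)).toLinearMap * (f.leftMulMapPreGNS (S i)).toLinearMap = 1 := by
  ext x
  simp [← mul_assoc, ← map_sum, ← Finset.sum_mul, hS]

theorem norm_toPreGNS_sq (a : A) : ‖f.toPreGNS a‖ ^ 2 = (f (star a * a)).re := by
  rw [← Complex.ofReal_re (_ ^ 2), Complex.ofReal_pow, preGNS_norm_sq, ofPreGNS_toPreGNS]

theorem maassen_uffink {ι κ : Type*} [Fintype ι] [Fintype κ] (hf : f 1 = 1) {S : ι → A}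
    {T : κ → A} (hS : ∀ i, IsSelfAdjoint (S i)) (hT : ∀ j, IsSelfAdjoint (T j))
    (hSsum : ∑ i, S i * S i = 1) (hTsum : ∑ j, T j * T j = 1) {C : ℝ}
    (hC : ∀ i j, ‖S i * T j‖ ≤ C) :
    -2 * Real.log C ≤
      ∑ i, Real.negMulLog (f (S i * S i)).re + ∑ j, Real.negMulLog (f (T j * T j)).re := by
  have hvec : ∀ a : A, IsSelfAdjoint a → ‖f.toPreGNS a‖ ^ 2 = (f (a * a)).re := fun a ha => by
    rw [norm_toPreGNS_sq, ha.star_eq]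
  have hΩ : ‖f.toPreGNS 1‖ = 1 := by
    rw [← pow_eq_one_iff_of_nonneg (norm_nonneg _) two_ne_zero, norm_toPreGNS_sq]
    simp [hf]
  have hPQ : ∀ i j x, ‖f.leftMulMapPreGNS (S i) (f.leftMulMapPreGNS (T j) x)‖ ≤ C * ‖x‖ :=
    fun i j x => calc
      _ = ‖f.leftMulMapPreGNS (S i * T j) x‖ := by simp
      _ ≤ ‖S i * T j‖ * ‖x‖ :=
        (ContinuousLinearMap.le_opNorm _ x).trans (by gcongr; exact f.norm_leftMulMapPreGNS_le _)
      _ ≤ C * ‖x‖ := by gcongr; exact hC i j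
  simpa [hvec _ (hS _), hvec _ (hT _)] using InnerProductSpace.maassen_uffink
    (fun i => f.isSymmetric_leftMulMapPreGNS (hS i))
    (fun j => f.isSymmetric_leftMulMapPreGNS (hT j))
    (f.sum_leftMulMapPreGNS_mul_self hSsum) (f.sum_leftMulMapPreGNS_mul_self hTsum) hΩ hPQ

end PositiveLinearMap

namespace Matrix

variable {n : Type*} [Fintype n]

open scoped MatrixOrder in
theorem PosSemidef.trace_mul_nonneg {𝕜 : Type*} [RCLike 𝕜] {ρ X : Matrix n n 𝕜}
    (hρ : ρ.PosSemidef) (hX : X.PosSemidef) : 0 ≤ (ρ * X).trace := by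
  classical
  obtain ⟨b, rfl⟩ := CStarAlgebra.nonneg_iff_eq_star_mul_self.mp hρ.nonneg
  rw [mul_assoc, trace_mul_comm]
  exact (nonneg_iff_posSemidef.mp (star_right_conjugate_nonneg hX.nonneg b)).trace_nonneg

open scoped MatrixOrder in
noncomputable def PosSemidef.traceMulPositiveLinearMap {𝕜 : Type*} [RCLike 𝕜] {ρ : Matrix n n 𝕜}
    (hρ : ρ.PosSemidef) : Matrix n n 𝕜 →ₚ[𝕜] 𝕜 :=
  .mk₀ (traceLinearMap n 𝕜 𝕜 ∘ₗ LinearMap.mulLeft 𝕜 ρ) fun _ hX =>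
    hρ.trace_mul_nonneg (nonneg_iff_posSemidef.mp hX)

@[simp]
theorem PosSemidef.traceMulPositiveLinearMap_apply {𝕜 : Type*} [RCLike 𝕜] {ρ : Matrix n n 𝕜}
    (hρ : ρ.PosSemidef) (X : Matrix n n 𝕜) : hρ.traceMulPositiveLinearMap X = (ρ * X).trace :=
  rfl

theorem povmEntropy_eq_sum_negMulLog {ι : Type*} [Fintype ι] (ρ : Matrix n n ℂ)
    (A : ι → Matrix n n ℂ) : povmEntropy ρ A = ∑ a, Real.negMulLog (ρ * A a).trace.re := by
  simp [povmEntropy, Real.negMulLog, Finset.sum_neg_distrib]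

variable [DecidableEq n]

open scoped Matrix.Norms.L2Operator MatrixOrder in
theorem maassen_uffink {ι κ : Type*} [Fintype ι] [Fintype κ] {ρ : Matrix n n ℂ}
    (hρ : ρ.PosSemidef) (hρtr : ρ.trace = 1) {S : ι → Matrix n n ℂ} {T : κ → Matrix n n ℂ}
    (hS : ∀ i, (S i).IsHermitian) (hT : ∀ j, (T j).IsHermitian)
    (hSsum : ∑ i, S i * S i = 1) (hTsum : ∑ j, T j * T j = 1) {C : ℝ}
    (hC : ∀ i j, opNorm (S i * T j) ≤ C) :
    -2 * Real.log C ≤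
      povmEntropy ρ (fun i => S i * S i) + povmEntropy ρ (fun j => T j * T j) := by
  simpa [povmEntropy_eq_sum_negMulLog] using hρ.traceMulPositiveLinearMap.maassen_uffink
    (by simpa using hρtr) (fun i => (hS i).isSelfAdjoint) (fun j => (hT j).isSelfAdjoint)
    hSsum hTsum hC

end Matrix

theorem entropic_uncertainty_relation_general
    {n ι κ : Type*} [Fintype n] [DecidableEq n]
    [Fintype ι] [Fintype κ]
    (ρ : Matrix n n ℂ) (hρ : ρ.PosSemidef) (hρtr : ρ.trace = 1)
    (A : ι → Matrix n n ℂ) (B : κ → Matrix n n ℂ)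
    (hAsum : ∑ a, A a = 1) (hBsum : ∑ b, B b = 1)
    (SA : ι → Matrix n n ℂ) (SB : κ → Matrix n n ℂ)
    (hSA : ∀ a, (SA a).PosSemidef ∧ SA a * SA a = A a)
    (hSB : ∀ b, (SB b).PosSemidef ∧ SB b * SB b = B b) :
    povmEntropy ρ A + povmEntropy ρ B ≥
      -2 * Real.log (⨆ a, ⨆ b, opNorm (SA a * SB b)) := by
  obtain rfl : A = fun a => SA a * SA a := funext fun a => (hSA a).2.symm
  obtain rfl : B = fun b => SB b * SB b := funext fun b => (hSB b).2.symm
  exact Matrix.maassen_uffink hρ hρtr (fun a => (hSA a).1.isHermitian)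
    (fun b => (hSB b).1.isHermitian) hAsum hBsum fun a b =>
      le_ciSup_of_le (Set.finite_range _).bddAbove a
        (le_ciSup (f := fun b => opNorm (SA a * SB b)) (Set.finite_range _).bddAbove b)

/-- **Entropic uncertainty relation for POVMs.** For any two POVMs
`A = {A a}` and `B = {B b}` on a finite-dimensional Hilbert space, with positive
semidefinite square roots `SA a` and `SB b`, and any density operator `ρ`,
`H(A|ρ) + H(B|ρ) ≥ -2 log max_{a,b} ‖A_a^{1/2} B_b^{1/2}‖`. -/
theorem entropic_uncertainty_relation
    {n ι κ : Type*} [Fintype n] [DecidableEq n]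
    [Fintype ι] [Fintype κ] [Nonempty ι] [Nonempty κ]
    (ρ : Matrix n n ℂ) (hρ : ρ.PosSemidef) (hρtr : ρ.trace = 1)
    (A : ι → Matrix n n ℂ) (B : κ → Matrix n n ℂ)
    (hA : ∀ a, (A a).PosSemidef) (hB : ∀ b, (B b).PosSemidef)
    (hAsum : ∑ a, A a = 1) (hBsum : ∑ b, B b = 1)
    (SA : ι → Matrix n n ℂ) (SB : κ → Matrix n n ℂ)
    (hSA : ∀ a, (SA a).PosSemidef ∧ SA a * SA a = A a)
    (hSB : ∀ b, (SB b).PosSemidef ∧ SB b * SB b = B b) :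
    povmEntropy ρ A + povmEntropy ρ B ≥
      -2 * Real.log (⨆ a, ⨆ b, opNorm (SA a * SB b)) :=
  entropic_uncertainty_relation_general ρ hρ hρtr A B hAsum hBsum SA SB hSA hSB
end

section
/- Norm bound for error-syndrome projections: Let {|i⟩}_{i∈{0,1}^N} and {|ī⟩} be mutually unbiased product bases of (C²)^{⊗N}, let |ĩ⟩ denote the componentwise complex conjugate of |ī⟩ in the basis {|i⟩}, and define projections E_l = Σ_i |ĩ⟩⟨ĩ| ⊗ |\overline{i⊕l}⟩⟨\overline{i⊕l}| on H_A ⊗ H_B and P_j = |j⟩⟨j| ⊗ 1. Then ‖E_l P_j‖ ≤ 2^{-N/2} for all l, j ∈ {0,1}^N. -/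
open Matrix Kronecker

theorem CStarRing.norm_le_sqrt_of_star_mul_self_eq_smul {E : Type*} [NormedRing E] [StarRing E]
    [CStarRing E] [NormedAlgebra ℂ E] {a p : E} (hp : IsStarProjection p) {c : ℝ} (hc : 0 ≤ c)
    (h : star a * a = (c : ℂ) • p) : ‖a‖ ≤ √c := by
  refine Real.le_sqrt_of_sq_le ?_
  calc ‖a‖ ^ 2 = ‖star a * a‖ := by rw [CStarRing.norm_star_mul_self, sq]
    _ = c * ‖p‖ := by rw [h, norm_smul, Complex.norm_real, Real.norm_of_nonneg hc]
    _ ≤ c := mul_le_of_le_one_right hc (hp.norm_le p)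

namespace Matrix

variable {ι l m n R : Type*} [CommSemiring R]

theorem kronecker_sum [Fintype ι] (A : Matrix l m R) (B : ι → Matrix n n R) :
    A ⊗ₖ (∑ i, B i) = ∑ i, A ⊗ₖ B i := by
  ext; simp [Matrix.sum_apply, Finset.mul_sum]

theorem conjTranspose_mul_self_sum_kronecker [Fintype ι] [Fintype l] [Fintype n] [DecidableEq ι]
    [StarRing R]
    (A : ι → Matrix l m R) (V : ι → Matrix n n R)
    (hV : ∀ i k, V i * V k = if i = k then V i else 0) (hVh : ∀ i, (V i)ᴴ = V i) :
    (∑ i, A i ⊗ₖ V i)ᴴ * (∑ i, A i ⊗ₖ V i) = ∑ i, ((A i)ᴴ * A i) ⊗ₖ V i := by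
  simp only [conjTranspose_sum, conjTranspose_kronecker, hVh, Matrix.sum_mul, Matrix.mul_sum,
    ← mul_kronecker_mul, hV]
  refine Finset.sum_congr rfl fun i _ => ?_
  simp [apply_ite]

section KetBra

variable [StarRing R]

def ketBra (u : n → R) : Matrix n n R := vecMulVec u (star u)

theorem conjTranspose_ketBra (u : n → R) : (ketBra u)ᴴ = ketBra u := by
  rw [ketBra, conjTranspose_vecMulVec, star_star]

theorem ketBra_mul_ketBra [Fintype n] (u v : n → R) :
    ketBra u * ketBra v = (star u ⬝ᵥ v) • vecMulVec u (star v) := by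
  rw [ketBra, ketBra, vecMulVec_mul_vecMulVec, vecMulVec_smul]

theorem ketBra_mul_ketBra_of_orthonormal [Fintype n] [DecidableEq ι] {v : ι → n → R}
    (hv : ∀ i k, star (v i) ⬝ᵥ v k = if i = k then 1 else 0) (i k : ι) :
    ketBra (v i) * ketBra (v k) = if i = k then ketBra (v i) else 0 := by
  rw [ketBra_mul_ketBra, hv]
  split_ifs with h
  · subst h
    exact one_smul R _
  · exact zero_smul R _

/-- Row orthonormality of a square matrix implies column orthonormality. -/
theorem sum_ketBra_eq_one {R : Type*} [CommRing R] [StarRing R] [Fintype n] [DecidableEq n]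
    {v : n → n → R} (hv : ∀ i k, star (v i) ⬝ᵥ v k = if i = k then 1 else 0) :
    ∑ i, ketBra (v i) = 1 := by
  set W : Matrix n n R := of fun x i => v i x
  have hW : Wᴴ * W = 1 := by
    ext i k
    simpa [W, Matrix.mul_apply, one_apply, dotProduct] using hv i k
  have hW' := mul_eq_one_comm.mp hW
  ext x y
  simpa [W, ketBra, Matrix.sum_apply, Matrix.mul_apply, vecMulVec_apply] using
    congrFun (congrFun hW' x) y

end KetBra

theorem isStarProjection_single_kronecker_one [StarRing R] [Fintype m] [Fintype n]
    [DecidableEq m] [DecidableEq n] (j : m) :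
    IsStarProjection (single j j (1 : R) ⊗ₖ (1 : Matrix n n R)) where
  isIdempotentElem := by
    rw [IsIdempotentElem, ← mul_kronecker_mul, single_mul_single_same, one_mul, mul_one]
  isSelfAdjoint := by
    rw [IsSelfAdjoint, star_eq_conjTranspose, conjTranspose_kronecker, conjTranspose_single,
      conjTranspose_one, star_one]

theorem conjTranspose_mul_self_sum_ketBra_kronecker_mul_single_kronecker_one [StarRing R]
    [Fintype ι] [Fintype m] [Fintype n] [DecidableEq ι] [DecidableEq m] [DecidableEq n]
    {u : ι → m → R} {v : ι → n → R} (hu : ∀ i, star (u i) ⬝ᵥ u i = 1)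
    (hv : ∀ i k, star (v i) ⬝ᵥ v k = if i = k then 1 else 0) (hv_sum : ∑ i, ketBra (v i) = 1)
    (j : m) {c : R} (hc : ∀ i, u i j * star (u i j) = c) :
    ((∑ i, ketBra (u i) ⊗ₖ ketBra (v i)) * (single j j 1 ⊗ₖ 1))ᴴ *
        ((∑ i, ketBra (u i) ⊗ₖ ketBra (v i)) * (single j j 1 ⊗ₖ 1)) =
      c • (single j j 1 ⊗ₖ (1 : Matrix n n R)) := by
  have hprod : (∑ i, ketBra (u i) ⊗ₖ ketBra (v i)) * (single j j 1 ⊗ₖ 1) =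
      ∑ i, (ketBra (u i) * single j j 1) ⊗ₖ ketBra (v i) := by
    simp only [Matrix.sum_mul, ← mul_kronecker_mul, mul_one]
  have hterm : ∀ i, (ketBra (u i) * single j j 1)ᴴ * (ketBra (u i) * single j j 1) =
      c • single j j 1 := fun i => by
    rw [conjTranspose_mul, conjTranspose_ketBra, conjTranspose_single, star_one, mul_assoc,
      ← mul_assoc (ketBra _), ketBra_mul_ketBra, hu, one_smul, ← mul_assoc, single_mul_mul_single,
      one_mul, mul_one, vecMulVec_apply, Pi.star_apply, hc, smul_single, smul_eq_mul,
      mul_one]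
  rw [hprod, conjTranspose_mul_self_sum_kronecker _ _ (ketBra_mul_ketBra_of_orthonormal hv)
    (fun i => conjTranspose_ketBra _)]
  simp only [hterm, smul_kronecker, ← Finset.smul_sum, ← kronecker_sum, hv_sum]

end Matrix

section

open scoped Matrix.Norms.L2Operator

theorem opNorm_le_sqrt_of_conjTranspose_mul_self_eq_smul {n : Type*} [Fintype n] [DecidableEq n]
    {A P : Matrix n n ℂ} (hP : IsStarProjection P) {c : ℝ} (hc : 0 ≤ c)
    (h : Aᴴ * A = (c : ℂ) • P) : opNorm A ≤ √c :=
  CStarRing.norm_le_sqrt_of_star_mul_self_eq_smul hP hc h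

end

/-- **Norm bound for error-syndrome projections.** Let `{|i⟩}` be the
computational basis of `(ℂ²)^{⊗N}` and `{|ī⟩}` a mutually unbiased orthonormal basis
(components `eb i x = ⟨x|ī⟩` with `|eb i x|² = 2^{-N}`); let `|ĩ⟩` be the
componentwise complex conjugate of `|ī⟩`. With `E l = ∑ i |ĩ⟩⟨ĩ| ⊗ |\overline{i⊕l}⟩⟨\overline{i⊕l}|`
and `P j = |j⟩⟨j| ⊗ 1`, one has `‖E l * P j‖ ≤ 2^{-N/2}` for all `l, j`. -/
theorem error_syndrome_norm_bound
    {N : ℕ}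
    (eb : (Fin N → Bool) → (Fin N → Bool) → ℂ)
    (hortho : ∀ i j, ∑ x, starRingEnd ℂ (eb i x) * eb j x = if i = j then 1 else 0)
    (hmub : ∀ i x, ‖eb i x‖ ^ 2 = 1 / 2 ^ N)
    (E : (Fin N → Bool) → Matrix ((Fin N → Bool) × (Fin N → Bool))
          ((Fin N → Bool) × (Fin N → Bool)) ℂ)
    (hE : E = fun l => ∑ i : Fin N → Bool,
      vecMulVec (fun x => starRingEnd ℂ (eb i x)) (star fun x => starRingEnd ℂ (eb i x))
        ⊗ₖ vecMulVec (eb fun k => xor (i k) (l k)) (star (eb fun k => xor (i k) (l k))))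
    (P : (Fin N → Bool) → Matrix ((Fin N → Bool) × (Fin N → Bool))
          ((Fin N → Bool) × (Fin N → Bool)) ℂ)
    (hP : P = fun j => Matrix.single j j (1 : ℂ) ⊗ₖ (1 : Matrix _ _ ℂ))
    (l j : Fin N → Bool) :
    opNorm (E l * P j) ≤ Real.sqrt (1 / 2 ^ N) := by
  subst hE hP
  have horth : ∀ i k, star (eb i) ⬝ᵥ eb k = if i = k then 1 else 0 := hortho
  let σ := Function.Involutive.toPerm (fun i k => xor (i k) (l k)) fun i => by
    funext k; simp
  have hu : ∀ i, star (star (eb i)) ⬝ᵥ star (eb i) = 1 := fun i => by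
    rw [star_star, dotProduct_comm, horth, if_pos rfl]
  have hv : ∀ i k, star (eb (σ i)) ⬝ᵥ eb (σ k) = if i = k then 1 else 0 := fun i k => by
    simp only [horth, σ.injective.eq_iff]
  have hv_sum : ∑ i, ketBra (eb (σ i)) = 1 := by
    rw [Equiv.sum_comp σ (fun m => ketBra (eb m)), sum_ketBra_eq_one horth]
  have hmod : ∀ i, star (eb i) j * star (star (eb i) j) = ((1 / 2 ^ N : ℝ) : ℂ) := fun i => by
    rw [Pi.star_apply, star_star, Complex.star_def, Complex.conj_mul', ← Complex.ofReal_pow,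
      hmub]
  exact opNorm_le_sqrt_of_conjTranspose_mul_self_eq_smul (isStarProjection_single_kronecker_one j)
    (by positivity)
    (conjTranspose_mul_self_sum_ketBra_kronecker_mul_single_kronecker_one hu hv hv_sum j hmod)
end
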